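/- Let T be the caterpillar chain whose non-singleton clusters are {1,2}, {1,2,3}, ..., {1,...,n}, and let R be the caterpillar chain whose non-singleton clusters are {n−1,n}, {n−2,n−1,n}, ..., {1,...,n}. Then d(T,R) = (n−1)(n−2)/2. -/

import Mathlib

/-!
Deleting the last leaf sends a chain on `M + 2` leaves to a chain on `M + 1` leaves: the level at
which the last leaf joins another block is skipped and every other level is restricted. An RNNI
move either leaves this projection unchanged and shifts that level by at most one, or keeps the
level and projects to an RNNI move. The level is `n - 1` for `T` and `1` for `R`, and both project
to the same kind of caterpillar on one leaf fewer, so `d(T, R) ≥ d(T', R') + (n - 2)`, which sums to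
`(n - 1)(n - 2) / 2`.

Conversely, the caterpillars adding the leaves in the order `k, k + 1, …, n - 1, k - 1, …, 0`
interpolate between `T` (for `k = 0`) and `R` (for `k = n - 2`); passing from `k` to `k + 1` moves
leaf `k` past the `n - 2 - k` leaves after it, one RNNI move each.
-/

/-- A maximal chain in the partition lattice of `Fin n`: a sequence
`P 0 < P 1 < … < P (n-1)` of partitions (modeled as setoids, ordered by refinement),
starting at the discrete partition `⊥`, ending at the trivial partition `⊤`,
each step being a covering step (merging exactly two blocks).
We index by `ℕ` and require the chain to be constantly `⊤` from index `n-1` on. -/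
structure RChain (n : ℕ) where
  P : ℕ → Setoid (Fin n)
  first : P 0 = ⊥
  last : ∀ i, n - 1 ≤ i → P i = ⊤
  step : ∀ i, i < n - 1 → P i ⋖ P (i + 1)

/-- The RNNI graph on `n` leaves: vertices are maximal chains in the partition
lattice of `Fin n`, two chains being adjacent iff they differ in exactly one partition. -/
def RNNI (n : ℕ) : SimpleGraph (RChain n) where
  Adj T R := ∃! i : ℕ, T.P i ≠ R.P i
  symm := ⟨by
    rintro T R ⟨i, hi, hu⟩
    exact ⟨i, hi.symm, fun j hj => hu j hj.symm⟩⟩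
  loopless := ⟨by
    rintro T ⟨i, hi, -⟩
    exact hi rfl⟩

/-- `C` is a cluster of the chain `T` if it is a block (equivalence class)
of some partition of the chain. -/
def IsCluster {n : ℕ} (T : RChain n) (C : Set (Fin n)) : Prop :=
  ∃ i, C ∈ (T.P i).classes

/-- A chain is a caterpillar chain if any two of its non-singleton clusters are
comparable under inclusion. -/
def IsCaterpillar {n : ℕ} (T : RChain n) : Prop :=
  ∀ C D : Set (Fin n), IsCluster T C → IsCluster T D →
    ¬ C.Subsingleton → ¬ D.Subsingleton → (C ⊆ D ∨ D ⊆ C)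

/-- For a caterpillar chain `T`, `rk T a` is the least index `i` such that the
block of `a` in `P i` is not a singleton (necessarily `i ≥ 1`). -/
noncomputable def rk {n : ℕ} (T : RChain n) (a : Fin n) : ℕ :=
  sInf {i | ∃ b, b ≠ a ∧ (T.P i) a b}

/-- A DCT vertex: a maximal chain on the ground set `Fin (m+2)` (representing
`{1, …, m+2}`, with `a_i ↦ i - 1`) having the set `{1, …, n}` and each of the sets
`B_k = {n+1, …, n+1+k}`, `k = 1, …, m+1-n`, as clusters. -/
def IsDCT (n m : ℕ) (X : RChain (m + 2)) : Prop :=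
  IsCluster X {x | x.val < n} ∧
  ∀ k, 1 ≤ k → k ≤ m + 1 - n → IsCluster X {x | n ≤ x.val ∧ x.val ≤ n + k}

/-- The subgraph of the RNNI graph induced on the DCT vertices. -/
def DCTGraph (n m : ℕ) : SimpleGraph {Z : RChain (m + 2) // IsDCT n m Z} :=
  SimpleGraph.comap Subtype.val (RNNI (m + 2))

/-- A caterpillar DCT vertex: a DCT vertex whose non-singleton clusters contained in
`{1, …, n}` are pairwise comparable under inclusion. -/
def IsCatDCT (n m : ℕ) (X : RChain (m + 2)) : Prop :=
  IsDCT n m X ∧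
  ∀ C D : Set (Fin (m + 2)), IsCluster X C → IsCluster X D →
    C ⊆ {x | x.val < n} → D ⊆ {x | x.val < n} →
    ¬ C.Subsingleton → ¬ D.Subsingleton → (C ⊆ D ∨ D ⊆ C)

namespace Setoid

variable {α β : Type*} {s t : Setoid α} {x y : α}

def merge (s : Setoid α) (x y : α) : Setoid α where
  r a b := s a b ∨ ((s a x ∨ s a y) ∧ (s b x ∨ s b y))
  iseqv :=
    { refl := fun a => Or.inl (s.refl' a)
      symm := fun h => h.imp s.symm' And.symm
      trans := by
        rintro a b c (hab | ⟨ha, hb⟩) (hbc | ⟨hb', hc⟩)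
        · exact Or.inl (s.trans' hab hbc)
        · exact Or.inr ⟨hb'.imp (s.trans' hab) (s.trans' hab), hc⟩
        · exact Or.inr ⟨ha, hb.imp (s.trans' (s.symm' hbc)) (s.trans' (s.symm' hbc))⟩
        · exact Or.inr ⟨ha, hc⟩ }

@[simp]
lemma merge_rel {a b : α} :
    s.merge x y a b ↔ s a b ∨ ((s a x ∨ s a y) ∧ (s b x ∨ s b y)) :=
  Iff.rfl

lemma le_merge (s : Setoid α) (x y : α) : s ≤ s.merge x y := fun _ _ => Or.inl

lemma merge_rel_self (s : Setoid α) (x y : α) : s.merge x y x y :=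
  Or.inr ⟨Or.inl (s.refl' x), Or.inr (s.refl' y)⟩

lemma merge_comm (s : Setoid α) (x y : α) : s.merge x y = s.merge y x := by
  ext a b
  simp only [merge_rel, or_comm (a := s a x), or_comm (a := s b x)]

lemma merge_congr {x' y' : α} (hx : s x x') (hy : s y y') : s.merge x y = s.merge x' y' := by
  have hx' : ∀ a, s a x ↔ s a x' := fun a => ⟨(s.trans' · hx), (s.trans' · (s.symm' hx))⟩
  have hy' : ∀ a, s a y ↔ s a y' := fun a => ⟨(s.trans' · hy), (s.trans' · (s.symm' hy))⟩
  ext a b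
  simp only [merge_rel, hx', hy']

lemma merge_le (hst : s ≤ t) (hxy : t x y) : s.merge x y ≤ t := by
  have hy : ∀ {a}, s a x ∨ s a y → t a y := fun h =>
    h.elim (fun h => t.trans' (hst h) hxy) (fun h => hst h)
  rintro a b (h | ⟨ha, hb⟩)
  · exact hst h
  · exact t.trans' (hy ha) (t.symm' (hy hb))

lemma covBy_merge (h : ¬ s x y) : s ⋖ s.merge x y := by
  refine ⟨lt_of_le_of_ne (le_merge s x y) fun heq => h ?_, fun c hsc hcm => ?_⟩
  · rw [heq]
    exact merge_rel_self s x y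
  obtain ⟨a, b, hab, hsab⟩ : ∃ a b, c a b ∧ ¬ s a b := by
    by_contra! hno
    exact hsc.not_ge fun a b => hno a b
  have hcx : ∀ {a b}, s a x → c a b → s b y → c x y := fun ha hab hb =>
    c.trans' (c.trans' (hsc.le (s.symm' ha)) hab) (hsc.le hb)
  -- `a` and `b` lie in different blocks of `s`, so one is in the block of `x`, the other of `y`
  have hxy : c x y := by
    rcases hcm.le hab with hs | ⟨ha | ha, hb | hb⟩
    · exact absurd hs hsab
    · exact absurd (s.trans' ha (s.symm' hb)) hsab
    · exact hcx ha hab hb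
    · exact hcx hb (c.symm' hab) ha
    · exact absurd (s.trans' ha (s.symm' hb)) hsab
  exact hcm.not_ge (merge_le hsc.le hxy)

lemma _root_.CovBy.exists_eq_merge (h : s ⋖ t) : ∃ x y, ¬ s x y ∧ t = s.merge x y := by
  obtain ⟨x, y, hxy, hsxy⟩ : ∃ x y, t x y ∧ ¬ s x y := by
    by_contra! hno
    exact h.lt.not_ge fun a b => hno a b
  refine ⟨x, y, hsxy, ((merge_le h.le hxy).lt_or_eq.resolve_left ?_).symm⟩
  exact h.2 (covBy_merge hsxy).lt

lemma comap_merge (f : β → α) (s : Setoid α) (x y : β) :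
    (s.merge (f x) (f y)).comap f = (s.comap f).merge x y :=
  rfl

def Isolated (s : Setoid α) (a : α) : Prop := ∀ b, s a b → b = a

lemma Isolated.anti {a : α} (hst : s ≤ t) (ht : t.Isolated a) : s.Isolated a :=
  fun b h => ht b (hst h)

end Setoid

open Setoid

section DeleteLast

variable {M : ℕ} {s t : Setoid (Fin (M + 2))}

lemma exists_rel_castSucc {a : Fin (M + 2)} (h : a = Fin.last (M + 1) → ¬ s.Isolated a) :
    ∃ a' : Fin (M + 1), s a a'.castSucc := by
  by_cases ha : a = Fin.last (M + 1)
  · obtain ⟨b, hab, hb⟩ : ∃ b, s a b ∧ b ≠ a := by simpa [Isolated] using h ha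
    obtain ⟨b', rfl⟩ := Fin.exists_castSucc_eq.2 (ha ▸ hb)
    exact ⟨b', hab⟩
  · obtain ⟨a', rfl⟩ := Fin.exists_castSucc_eq.2 ha
    exact ⟨a', s.refl' _⟩

lemma comap_castSucc_covBy (hst : s ⋖ t)
    (hiso : s.Isolated (Fin.last (M + 1)) → t.Isolated (Fin.last (M + 1))) :
    s.comap Fin.castSucc ⋖ t.comap Fin.castSucc := by
  obtain ⟨u, v, huv, rfl⟩ := hst.exists_eq_merge
  -- an isolated last leaf stays isolated in `t`, so it is neither `u` nor `v`
  have hne : ∀ {w z}, ¬ s w z → s.merge u v w z → w = Fin.last (M + 1) → ¬ s.Isolated w := by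
    rintro w z hwz hm rfl hw
    exact hwz (by rw [hiso hw z hm])
  obtain ⟨u', hu⟩ := exists_rel_castSucc (hne huv (merge_rel_self s u v))
  obtain ⟨v', hv⟩ := exists_rel_castSucc
    (hne (fun h => huv (s.symm' h)) ((s.merge u v).symm' (merge_rel_self s u v)))
  rw [merge_congr hu hv, comap_merge]
  exact covBy_merge fun h => huv (s.trans' (s.trans' hu h) (s.symm' hv))

lemma comap_castSucc_merge_last (hs : s.Isolated (Fin.last (M + 1))) (v : Fin (M + 2)) :
    (s.merge (Fin.last (M + 1)) v).comap Fin.castSucc = s.comap Fin.castSucc := by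
  have hne : ∀ a : Fin (M + 1), ¬ s a.castSucc (Fin.last (M + 1)) := fun a h =>
    (Fin.castSucc_lt_last a).ne (hs _ (s.symm' h))
  ext a b
  simp only [comap_rel, merge_rel, hne, false_or]
  exact ⟨fun h => h.elim id fun h => s.trans' h.1 (s.symm' h.2), Or.inl⟩

lemma comap_castSucc_eq_of_covBy (hst : s ⋖ t) (hs : s.Isolated (Fin.last (M + 1)))
    (ht : ¬ t.Isolated (Fin.last (M + 1))) :
    s.comap Fin.castSucc = t.comap Fin.castSucc := by
  obtain ⟨u, v, -, rfl⟩ := hst.exists_eq_merge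
  obtain ⟨b, hb, hbne⟩ : ∃ b, s.merge u v (Fin.last (M + 1)) b ∧ b ≠ Fin.last (M + 1) := by
    simpa [Isolated] using ht
  rcases hb with hb | ⟨hu | hv, -⟩
  · exact absurd (hs b hb) hbne
  · rw [hs u hu, comap_castSucc_merge_last hs]
  · rw [hs v hv, merge_comm, comap_castSucc_merge_last hs]

end DeleteLast

namespace RChain

variable {n M : ℕ}

lemma ext {X Y : RChain n} (h : X.P = Y.P) : X = Y := by
  cases X
  cases Y
  congr

lemma monotone (X : RChain n) : Monotone X.P :=
  monotone_nat_of_le_succ fun i =>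
    if hi : i < n - 1 then (X.step i hi).le
    else ((X.last i (by omega)).trans (X.last (i + 1) (by omega)).symm).le

lemma subsingleton (hn : n ≤ 1) : Subsingleton (RChain n) :=
  ⟨fun X Y => ext <| funext fun i => Setoid.ext fun x y => by
    obtain rfl : x = y := Fin.ext (by omega)
    exact iff_of_true ((X.P i).refl' x) ((Y.P i).refl' x)⟩

lemma eq_or_adj_of_forall_ne {X Y : RChain n} {i : ℕ} (h : ∀ m ≠ i, X.P m = Y.P m) :
    X = Y ∨ (RNNI n).Adj X Y := by
  by_cases hi : X.P i = Y.P i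
  · refine Or.inl (ext (funext fun m => ?_))
    obtain rfl | hm := eq_or_ne m i
    exacts [hi, h m hm]
  · exact Or.inr ⟨i, hi, fun m hm => by_contra fun hmi => hm (h m hmi)⟩

lemma exists_forall_ne_of_adj {X Y : RChain n} (h : (RNNI n).Adj X Y) :
    ∃ i, ∀ m ≠ i, X.P m = Y.P m := by
  obtain ⟨i, -, hi⟩ := h
  exact ⟨i, fun m hm => by_contra fun h => hm (hi m h)⟩

noncomputable def lastMergeLevel (X : RChain (M + 2)) : ℕ :=
  sInf {m | ¬ (X.P m).Isolated (Fin.last (M + 1))}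

variable {X Y : RChain (M + 2)} {m : ℕ}

lemma not_isolated_last_top (X : RChain (M + 2)) : ¬ (X.P (M + 1)).Isolated (Fin.last (M + 1)) :=
  fun h => (Fin.last_pos (n := M)).ne (h 0 (by rw [X.last (M + 1) (by omega)]; trivial))

lemma isolated_last_iff : (X.P m).Isolated (Fin.last (M + 1)) ↔ m < X.lastMergeLevel := by
  have hmem : X.lastMergeLevel ∈ {m | ¬ (X.P m).Isolated (Fin.last (M + 1))} :=
    Nat.sInf_mem ⟨M + 1, X.not_isolated_last_top⟩
  refine ⟨fun h => ?_, fun h => not_not.1 (Nat.notMem_of_lt_sInf h)⟩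
  by_contra! hle
  exact hmem (h.anti (X.monotone hle))

lemma isolated_last_zero (X : RChain (M + 2)) : (X.P 0).Isolated (Fin.last (M + 1)) := by
  intro b hb
  rw [X.first] at hb
  exact hb.symm

lemma lastMergeLevel_le (X : RChain (M + 2)) : X.lastMergeLevel ≤ M + 1 :=
  Nat.sInf_le X.not_isolated_last_top

lemma lastMergeLevel_eq (h : (X.P m).Isolated (Fin.last (M + 1)))
    (h' : ¬ (X.P (m + 1)).Isolated (Fin.last (M + 1))) : X.lastMergeLevel = m + 1 := by
  rw [isolated_last_iff] at h h'
  omega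

lemma comap_castSucc_eq_of_lastMergeLevel (h : X.lastMergeLevel = m + 1) :
    (X.P m).comap Fin.castSucc = (X.P (m + 1)).comap Fin.castSucc :=
  comap_castSucc_eq_of_covBy (X.step m (by have := X.lastMergeLevel_le; omega))
    (isolated_last_iff.2 (by omega)) (by rw [isolated_last_iff]; omega)

lemma comap_castSucc_covBy_of_lastMergeLevel_le (h : X.lastMergeLevel ≤ m)
    (hm : m < M + 1) :
    (X.P m).comap Fin.castSucc ⋖ (X.P (m + 1)).comap Fin.castSucc :=
  comap_castSucc_covBy (X.step m hm) fun hiso => absurd hiso (by rw [isolated_last_iff]; omega)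

/-- Deleting the last leaf; level `X.lastMergeLevel`, which then repeats the level below it,
is skipped. -/
noncomputable def dropLast (X : RChain (M + 2)) : RChain (M + 1) where
  P m := (X.P (if m < X.lastMergeLevel then m else m + 1)).comap Fin.castSucc
  first := by
    ext x y
    rw [if_pos (isolated_last_iff.1 X.isolated_last_zero), X.first]
    simp
  last i hi := by
    have hle := X.lastMergeLevel_le
    simp only [Nat.add_sub_cancel] at hi
    split_ifs with h
    · rw [comap_castSucc_eq_of_lastMergeLevel (by omega), X.last (i + 1) (by omega)]
      rfl
    · rw [X.last (i + 1) (by omega)]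
      rfl
  step m hm := by
    have hle := X.lastMergeLevel_le
    simp only [Nat.add_sub_cancel] at hm
    split_ifs with h₁ h₂ h₂
    · exact comap_castSucc_covBy (X.step m (by omega)) fun _ => isolated_last_iff.2 h₂
    · rw [comap_castSucc_eq_of_lastMergeLevel (by omega)]
      exact comap_castSucc_covBy_of_lastMergeLevel_le (by omega) (by omega)
    · omega
    · exact comap_castSucc_covBy_of_lastMergeLevel_le (by omega) (by omega)

lemma dropLast_P (X : RChain (M + 2)) (m : ℕ) :
    X.dropLast.P m = (X.P (if m < X.lastMergeLevel then m else m + 1)).comap Fin.castSucc :=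
  rfl

lemma lastMergeLevel_eq_or {i : ℕ} (h : ∀ m ≠ i, X.P m = Y.P m) :
    X.lastMergeLevel = Y.lastMergeLevel ∨
      X.lastMergeLevel = i + 1 ∧ Y.lastMergeLevel = i ∨
      X.lastMergeLevel = i ∧ Y.lastMergeLevel = i + 1 := by
  have key : ∀ m ≠ i, (m < X.lastMergeLevel ↔ m < Y.lastMergeLevel) := fun m hm => by
    rw [← isolated_last_iff, ← isolated_last_iff, h m hm]
  have h₁ := key X.lastMergeLevel
  have h₂ := key Y.lastMergeLevel
  have h₃ := key (X.lastMergeLevel - 1)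
  have h₄ := key (Y.lastMergeLevel - 1)
  omega

lemma dropLast_eq_of_lastMergeLevel {i : ℕ} (h : ∀ m ≠ i, X.P m = Y.P m)
    (hX : X.lastMergeLevel = i + 1) (hY : Y.lastMergeLevel = i) : X.dropLast = Y.dropLast := by
  refine ext (funext fun m => ?_)
  simp only [dropLast_P, hX, hY]
  rcases lt_trichotomy m i with hm | rfl | hm
  · rw [if_pos (by omega), if_pos hm, h m hm.ne]
  · rw [if_pos (by omega), if_neg (lt_irrefl m), comap_castSucc_eq_of_lastMergeLevel hX,
      h (m + 1) (by omega)]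
  · rw [if_neg (by omega), if_neg (by omega), h (m + 1) (by omega)]

lemma dropLast_eq_or_adj (hXY : (RNNI (M + 2)).Adj X Y) :
    X.dropLast = Y.dropLast ∧ X.lastMergeLevel ≤ Y.lastMergeLevel + 1 ∨
      X.lastMergeLevel = Y.lastMergeLevel ∧ (RNNI (M + 1)).Adj X.dropLast Y.dropLast := by
  obtain ⟨i, h⟩ := exists_forall_ne_of_adj hXY
  rcases lastMergeLevel_eq_or h with heq | ⟨hX, hY⟩ | ⟨hX, hY⟩
  · have hdrop : ∀ m ≠ (if i < Y.lastMergeLevel then i else i - 1),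
        X.dropLast.P m = Y.dropLast.P m := fun m hm => by
      rw [dropLast_P, dropLast_P, heq, h]
      split_ifs at hm ⊢ <;> omega
    rcases eq_or_adj_of_forall_ne hdrop with hd | hd
    exacts [Or.inl ⟨hd, by omega⟩, Or.inr ⟨heq, hd⟩]
  · exact Or.inl ⟨dropLast_eq_of_lastMergeLevel h hX hY, by omega⟩
  · exact Or.inl ⟨(dropLast_eq_of_lastMergeLevel (fun m hm => (h m hm).symm) hY hX).symm,
      by omega⟩

lemma exists_walk_dropLast (p : (RNNI (M + 2)).Walk X Y) :
    ∃ q : (RNNI (M + 1)).Walk X.dropLast Y.dropLast,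
      q.length + X.lastMergeLevel ≤ p.length + Y.lastMergeLevel := by
  induction p with
  | nil => exact ⟨.nil, le_rfl⟩
  | cons hXY _ ih =>
    obtain ⟨q, hq⟩ := ih
    rcases dropLast_eq_or_adj hXY with ⟨heq, hle⟩ | ⟨heq, hadj⟩
    · exact ⟨q.copy heq.symm rfl, by simp only [SimpleGraph.Walk.length_copy,
        SimpleGraph.Walk.length_cons]; omega⟩
    · exact ⟨.cons hadj q, by simp only [SimpleGraph.Walk.length_cons]; omega⟩

end RChain

section Caterpillars

variable {n M : ℕ}

def IsAscendingCaterpillar (T : RChain n) : Prop :=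
  ∀ i (x y : Fin n), T.P i x y ↔ x = y ∨ (x.val ≤ i ∧ y.val ≤ i)

def IsDescendingCaterpillar (R : RChain n) : Prop :=
  ∀ i (x y : Fin n), R.P i x y ↔ x = y ∨ (n - 1 - i ≤ x.val ∧ n - 1 - i ≤ y.val)

namespace IsAscendingCaterpillar

lemma lastMergeLevel_eq {T : RChain (M + 2)} (hT : IsAscendingCaterpillar T) :
    T.lastMergeLevel = M + 1 := by
  refine RChain.lastMergeLevel_eq (fun b hb => ?_) (T.not_isolated_last_top)
  rw [hT] at hb
  simp only [Fin.ext_iff, Fin.val_last] at hb ⊢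
  omega

lemma dropLast {T : RChain (M + 2)} (hT : IsAscendingCaterpillar T) :
    IsAscendingCaterpillar T.dropLast := by
  intro i x y
  rw [RChain.dropLast_P, lastMergeLevel_eq hT, comap_rel, hT]
  simp only [Fin.ext_iff, Fin.val_castSucc]
  split_ifs <;> omega

end IsAscendingCaterpillar

namespace IsDescendingCaterpillar

lemma lastMergeLevel_eq {R : RChain (M + 2)} (hR : IsDescendingCaterpillar R) :
    R.lastMergeLevel = 1 := by
  refine RChain.lastMergeLevel_eq R.isolated_last_zero fun h => ?_
  have := h ⟨M, by omega⟩ (by rw [hR]; simp only [Fin.val_last]; omega)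
  simp only [Fin.ext_iff, Fin.val_last] at this
  omega

lemma dropLast {R : RChain (M + 2)} (hR : IsDescendingCaterpillar R) :
    IsDescendingCaterpillar R.dropLast := by
  intro i x y
  rw [RChain.dropLast_P, lastMergeLevel_eq hR, comap_rel, hR]
  simp only [Fin.ext_iff, Fin.val_castSucc]
  have := x.isLt
  have := y.isLt
  split_ifs <;> omega

end IsDescendingCaterpillar

theorem sum_range_le_length_walk {T R : RChain (M + 1)} (hT : IsAscendingCaterpillar T)
    (hR : IsDescendingCaterpillar R) (p : (RNNI (M + 1)).Walk T R) :
    ∑ j ∈ Finset.range M, j ≤ p.length := by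
  induction M with
  | zero => simp
  | succ M ih =>
    obtain ⟨q, hq⟩ := RChain.exists_walk_dropLast p
    have := ih hT.dropLast hR.dropLast q
    rw [hT.lastMergeLevel_eq, hR.lastMergeLevel_eq] at hq
    rw [Finset.sum_range_succ]
    omega

end Caterpillars

section Intervals

def intervalSetoid (n a b : ℕ) : Setoid (Fin n) where
  r x y := x = y ∨ (a ≤ x.val ∧ x.val ≤ b ∧ a ≤ y.val ∧ y.val ≤ b)
  iseqv :=
    { refl := fun _ => Or.inl rfl
      symm := by intro x y; simp only [Fin.ext_iff]; omega
      trans := by intro x y z; simp only [Fin.ext_iff]; omega }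

@[simp]
lemma intervalSetoid_rel {n a b : ℕ} {x y : Fin n} :
    intervalSetoid n a b x y ↔ x = y ∨ (a ≤ x.val ∧ x.val ≤ b ∧ a ≤ y.val ∧ y.val ≤ b) :=
  Iff.rfl

lemma intervalSetoid_covBy {n a b a' b' : ℕ} (hab : a ≤ b) (hb' : b' < n)
    (h : a' = a ∧ b' = b + 1 ∨ a' + 1 = a ∧ b' = b) :
    intervalSetoid n a b ⋖ intervalSetoid n a' b' := by
  have : intervalSetoid n a' b' = (intervalSetoid n a b).merge ⟨a', by omega⟩ ⟨b', hb'⟩ := by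
    ext x y
    simp only [intervalSetoid_rel, merge_rel, Fin.ext_iff]
    omega
  rw [this]
  exact covBy_merge (by simp only [intervalSetoid_rel, Fin.ext_iff]; omega)

variable {N : ℕ} {lo lo' : ℕ → ℕ}

def intervalChain (N : ℕ) (lo : ℕ → ℕ) (hlo : ∀ i, lo i ≤ N + 1 - i)
    (hstep : ∀ i, lo (i + 1) ≤ lo i ∧ lo i ≤ lo (i + 1) + 1) : RChain (N + 2) where
  P i := intervalSetoid (N + 2) (lo i) (lo i + i)
  first := by
    ext x y
    simp only [intervalSetoid_rel, Setoid.bot_def, Fin.ext_iff]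
    omega
  last i hi := by
    have := hlo i
    ext x y
    simp only [intervalSetoid_rel, Setoid.top_def, Pi.top_apply, Prop.top_eq_true, iff_true]
    omega
  step i hi := by
    have := hlo (i + 1)
    exact intervalSetoid_covBy (by omega) (by omega) (by have := hstep i; omega)

lemma intervalChain_P (hlo : ∀ i, lo i ≤ N + 1 - i)
    (hstep : ∀ i, lo (i + 1) ≤ lo i ∧ lo i ≤ lo (i + 1) + 1) (i : ℕ) :
    (intervalChain N lo hlo hstep).P i = intervalSetoid (N + 2) (lo i) (lo i + i) :=
  rfl

variable {hlo : ∀ i, lo i ≤ N + 1 - i} {hstep : ∀ i, lo (i + 1) ≤ lo i ∧ lo i ≤ lo (i + 1) + 1}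
  {hlo' : ∀ i, lo' i ≤ N + 1 - i} {hstep' : ∀ i, lo' (i + 1) ≤ lo' i ∧ lo' i ≤ lo' (i + 1) + 1}

lemma intervalChain_congr (h : ∀ i, 1 ≤ i → lo i = lo' i) :
    intervalChain N lo hlo hstep = intervalChain N lo' hlo' hstep' := by
  refine RChain.ext (funext fun i => ?_)
  rcases Nat.eq_zero_or_pos i with rfl | hi
  · exact (RChain.first _).trans (RChain.first _).symm
  · exact congrArg (fun a => intervalSetoid (N + 2) a (a + i)) (h i hi)

lemma intervalChain_adj {i : ℕ} (hi : 1 ≤ i) (hlt : lo' i = lo i + 1)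
    (heq : ∀ j ≠ i, lo' j = lo j) :
    (RNNI (N + 2)).Adj (intervalChain N lo hlo hstep) (intervalChain N lo' hlo' hstep') := by
  refine ⟨i, fun h => ?_, fun j hj => by_contra fun hji => hj ?_⟩
  · have hbound := hlo' i
    have := (Setoid.ext_iff.1 h) ⟨lo i, by omega⟩ ⟨lo i + 1, by omega⟩
    rw [intervalChain_P, intervalChain_P, intervalSetoid_rel, intervalSetoid_rel] at this
    simp only [Fin.ext_iff] at this
    omega
  · rw [intervalChain_P, intervalChain_P, heq j hji]

end Intervals

section Path

/-- `stageChain N k s` adds the leaves in the order `k, k + 1, …, N + 1, k - 1, …, 0`, except that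
leaf `k` is moved `s` places later. -/
def stageChain (N k s : ℕ) : RChain (N + 2) :=
  intervalChain N (fun i => min (if i ≤ s then k + 1 else k) (N + 1 - i))
    (fun _ => min_le_right _ _) (fun i => by split_ifs <;> omega)

variable {N : ℕ}

lemma stageChain_adj {k s : ℕ} (h : s + 1 ≤ N - k) :
    (RNNI (N + 2)).Adj (stageChain N k s) (stageChain N k (s + 1)) :=
  intervalChain_adj (i := s + 1) (by omega) (by simp only [le_refl, if_pos]; split_ifs <;> omega)
    (fun j hj => by split_ifs <;> omega)

lemma stageChain_sub_eq_succ_zero (k : ℕ) : stageChain N k (N - k) = stageChain N (k + 1) 0 :=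
  intervalChain_congr fun i hi => by split_ifs <;> omega

lemma exists_walk_stageChain_zero_of_le (k : ℕ) {s : ℕ} (hs : s ≤ N - k) :
    ∃ w : (RNNI (N + 2)).Walk (stageChain N k 0) (stageChain N k s), w.length = s := by
  induction s with
  | zero => exact ⟨.nil, rfl⟩
  | succ s ih =>
    obtain ⟨w, hw⟩ := ih (by omega)
    exact ⟨w.concat (stageChain_adj hs), by rw [SimpleGraph.Walk.length_concat, hw]⟩

lemma exists_walk_stageChain {d k : ℕ} (hkd : k + d = N) :
    ∃ w : (RNNI (N + 2)).Walk (stageChain N k 0) (stageChain N N 0),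
      w.length = ∑ j ∈ Finset.range (d + 1), j := by
  induction d generalizing k with
  | zero => exact ⟨.copy .nil rfl (by rw [← hkd]; rfl), by simp⟩
  | succ d ih =>
    obtain ⟨w₁, hw₁⟩ := exists_walk_stageChain_zero_of_le k (s := N - k) le_rfl
    obtain ⟨w₂, hw₂⟩ := ih (k := k + 1) (by omega)
    refine ⟨w₁.append (w₂.copy (stageChain_sub_eq_succ_zero k).symm rfl), ?_⟩
    rw [SimpleGraph.Walk.length_append, SimpleGraph.Walk.length_copy, hw₁, hw₂,
      Finset.sum_range_succ _ (d + 1)]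
    omega

lemma IsAscendingCaterpillar.eq_stageChain {T : RChain (N + 2)} (hT : IsAscendingCaterpillar T) :
    T = stageChain N 0 0 := by
  refine RChain.ext (funext fun i => Setoid.ext fun x y => ?_)
  rw [hT]
  rw [stageChain, intervalChain_P, intervalSetoid_rel]
  simp only [Fin.ext_iff]
  split_ifs <;> omega

lemma IsDescendingCaterpillar.eq_stageChain {R : RChain (N + 2)}
    (hR : IsDescendingCaterpillar R) : R = stageChain N N 0 := by
  refine RChain.ext (funext fun i => Setoid.ext fun x y => ?_)
  rw [hR]
  have := x.isLt
  have := y.isLt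
  rw [stageChain, intervalChain_P, intervalSetoid_rel]
  simp only [Fin.ext_iff]
  split_ifs <;> omega

theorem exists_walk_length_eq_sum_range {T R : RChain (N + 2)} (hT : IsAscendingCaterpillar T)
    (hR : IsDescendingCaterpillar R) :
    ∃ w : (RNNI (N + 2)).Walk T R, w.length = ∑ j ∈ Finset.range (N + 1), j := by
  rw [hT.eq_stageChain, hR.eq_stageChain]
  exact exists_walk_stageChain (zero_add N)

end Path

theorem caterpillar_max_dist_general (n : ℕ) (T R : RChain n)
    (hT : ∀ i : ℕ, ∀ x y : Fin n, (T.P i) x y ↔ (x = y ∨ (x.val ≤ i ∧ y.val ≤ i)))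
    (hR : ∀ i : ℕ, ∀ x y : Fin n,
      (R.P i) x y ↔ (x = y ∨ (n - 1 - i ≤ x.val ∧ n - 1 - i ≤ y.val))) :
    (RNNI n).dist T R = (n - 1) * (n - 2) / 2 := by
  obtain hn | ⟨N, rfl⟩ : n ≤ 1 ∨ ∃ N, n = N + 2 := by
    rcases Nat.lt_or_ge n 2 with h | h
    exacts [Or.inl (by omega), Or.inr ⟨n - 2, by omega⟩]
  · rw [(RChain.subsingleton hn).elim T R, SimpleGraph.dist_self]
    simp [Nat.sub_eq_zero_of_le hn]
  have hsum : ∑ j ∈ Finset.range (N + 1), j = (N + 2 - 1) * (N + 2 - 2) / 2 :=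
    Finset.sum_range_id (N + 1)
  obtain ⟨w, hw⟩ := exists_walk_length_eq_sum_range hT hR
  obtain ⟨p, hp⟩ := w.reachable.exists_walk_length_eq_dist
  refine le_antisymm ?_ ?_
  · rw [← hsum, ← hw]
    exact SimpleGraph.dist_le w
  · rw [← hsum, ← hp]
    exact sum_range_le_length_walk hT hR p

/-- The two "opposite" caterpillar chains (with clusters `{1,2}, {1,2,3}, …` and
`{n-1,n}, {n-2,n-1,n}, …` respectively; here `a_i ↦ i-1 : Fin n`) are at RNNI
distance `(n-1)(n-2)/2`. -/
theorem caterpillar_max_dist (n : ℕ) (hn : 2 ≤ n) (T R : RChain n)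
    (hT : ∀ i : ℕ, ∀ x y : Fin n, (T.P i) x y ↔ (x = y ∨ (x.val ≤ i ∧ y.val ≤ i)))
    (hR : ∀ i : ℕ, ∀ x y : Fin n,
      (R.P i) x y ↔ (x = y ∨ (n - 1 - i ≤ x.val ∧ n - 1 - i ≤ y.val))) :
    (RNNI n).dist T R = (n - 1) * (n - 2) / 2 :=
  caterpillar_max_dist_general n T R hT hR
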